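/- arXiv:1910.01998 — 2 statements merged into one kernel-verified Lean document; each statement's English description precedes it below -/
import Mathlib

section
/- Let P(x) = ∑_{i=0}^n a_i B_i^n(x) with n ≥ 1, and let A_P and B_P be the n×n matrices of the Bernstein companion pencil: A_P has first row (-a_{n-1}, -a_{n-2}, …, -a_0), subdiagonal entries 1, and zeros elsewhere; B_P equals A_P except its (1,1) entry is -a_{n-1}+a_n/n and its diagonal entries (i,i) for i ≥ 2 are (i)/(n-i+1) in appropriate indexing (entry (k+1,k+1) = (k+1)/(n-k) for k = 1,…,n-1). Then for any real z ≠ 1, the vector v(z) with entries v_j = B_{n-j}^n(z)/(1-z) for j = 1,…,n satisfies (z·B_P − A_P)·v(z) = P(z)·e_1, where e_1 is the first standard basis vector. In particular, P(z) = 0 if and only if (z·B_P − A_P)·v(z) = 0. -/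
/-!
Split `z • B_P - A_P = (z - 1) • A_P + z • (B_P - A_P)`, where `B_P - A_P` is diagonal.
Every row then reduces to the Bernstein identity
`(n - k) x B_k^n(x) = (k + 1) (1 - x) B_{k+1}^n(x)`, a restatement of
`(k + 1) C(n, k + 1) = (n - k) C(n, k)`. In a row `i ≥ 1` the subdiagonal and diagonal
contributions cancel by it; in the first row `A_P` produces `∑_{k<n} a_k B_k^n(z)` and the
corner entry `a_n / n` produces `a_n B_n^n(z)`.
-/

/-- The Bernstein basis polynomial `B_k^n(x)` on `[0,1]`. -/
noncomputable def bern (n k : ℕ) (x : ℝ) : ℝ :=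
  (n.choose k : ℝ) * x ^ k * (1 - x) ^ (n - k)

/-- The matrix `A_P` of Jónsson's Bernstein companion pencil (0-indexed). -/
noncomputable def pencilA (n : ℕ) (a : ℕ → ℝ) : Matrix (Fin n) (Fin n) ℝ :=
  Matrix.of fun i j =>
    if (i : ℕ) = 0 then -(a (n - 1 - (j : ℕ)))
    else if (i : ℕ) = (j : ℕ) + 1 then 1 else 0

/-- The matrix `B_P` of Jónsson's Bernstein companion pencil (0-indexed). -/
noncomputable def pencilB (n : ℕ) (a : ℕ → ℝ) : Matrix (Fin n) (Fin n) ℝ :=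
  Matrix.of fun i j =>
    if (i : ℕ) = 0 ∧ (j : ℕ) = 0 then -(a (n - 1)) + a n / (n : ℝ)
    else if (i : ℕ) = 0 then -(a (n - 1 - (j : ℕ)))
    else if (i : ℕ) = (j : ℕ) + 1 then 1
    else if (i : ℕ) = (j : ℕ) then ((i : ℕ) + 1 : ℝ) / ((n : ℝ) - (i : ℕ)) else 0

lemma Nat.cast_choose_mul_sub {R : Type*} [Ring R] (n k : ℕ) :
    (n.choose k : R) * ((n : R) - k) = n.choose (k + 1) * (k + 1) := by
  rcases le_or_gt k n with hk | hk
  · have h := congrArg (Nat.cast : ℕ → R) (Nat.choose_succ_right_eq n k)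
    push_cast [hk] at h
    exact h.symm
  · simp [Nat.choose_eq_zero_of_lt hk, Nat.choose_eq_zero_of_lt (Nat.lt_succ_of_lt hk)]

lemma sub_mul_mul_bern (n k : ℕ) (x : ℝ) :
    ((n : ℝ) - k) * x * bern n k x = (k + 1) * (1 - x) * bern n (k + 1) x := by
  rcases lt_or_ge k n with hk | hk
  · have hpow : (1 - x) ^ (n - k) = (1 - x) * (1 - x) ^ (n - (k + 1)) := by
      rw [← pow_succ']; congr 1; omega
    simp only [bern, hpow]
    linear_combination
      x ^ (k + 1) * (1 - x) * (1 - x) ^ (n - (k + 1)) * Nat.cast_choose_mul_sub (R := ℝ) n k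
  · rcases hk.eq_or_lt with rfl | hk
    · simp [bern]
    · simp [bern, Nat.choose_eq_zero_of_lt hk, Nat.choose_eq_zero_of_lt (Nat.lt_succ_of_lt hk)]

open Matrix Finset

lemma pencilB_sub_pencilA (n : ℕ) (a : ℕ → ℝ) :
    pencilB n a - pencilA n a = diagonal fun i : Fin n =>
      if (i : ℕ) = 0 then a n / n else ((i : ℕ) + 1 : ℝ) / ((n : ℝ) - (i : ℕ)) := by
  ext ⟨_ | i, hi⟩ ⟨_ | j, hj⟩ <;> simp [pencilA, pencilB, diagonal_apply]
  split_ifs <;> first | omega | ring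

lemma pencilA_mulVec_apply_of_eq_zero {n : ℕ} (a : ℕ → ℝ) (v : Fin n → ℝ) {i : Fin n}
    (hi : (i : ℕ) = 0) : (pencilA n a *ᵥ v) i = -∑ j : Fin n, a (n - 1 - j) * v j := by
  simp [mulVec, dotProduct, pencilA, hi]

lemma pencilA_mulVec_apply_of_ne_zero {n : ℕ} (a : ℕ → ℝ) (v : Fin n → ℝ) {i : Fin n}
    (hi : (i : ℕ) ≠ 0) : (pencilA n a *ᵥ v) i = v ⟨i - 1, by omega⟩ := by
  have hsub : ∀ j : Fin n, (i : ℕ) = j + 1 ↔ j = ⟨i - 1, by omega⟩ := fun j => by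
    simp only [Fin.ext_iff]; omega
  simp [mulVec, dotProduct, pencilA, hi, hsub]

lemma Fin.sum_univ_sub_one_sub {M : Type*} [AddCommMonoid M] (n : ℕ) (f : ℕ → M) :
    ∑ j : Fin n, f (n - 1 - j) = ∑ k ∈ range n, f k := by
  rw [Fin.sum_univ_eq_sum_range (fun k => f (n - 1 - k)), Finset.sum_range_reflect]

lemma pencil_mulVec_bern (n : ℕ) (a : ℕ → ℝ) {z : ℝ} (hz : z ≠ 1) :
    (z • pencilB n a - pencilA n a) *ᵥ (fun i : Fin n => bern n (n - 1 - i) z / (1 - z)) =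
      fun i : Fin n => if (i : ℕ) = 0 then ∑ k ∈ range (n + 1), a k * bern n k z else 0 := by
  have h1z : 1 - z ≠ 0 := sub_ne_zero.mpr hz.symm
  have hsplit : z • pencilB n a - pencilA n a =
      (z - 1) • pencilA n a + z • (pencilB n a - pencilA n a) := by module
  rw [hsplit, add_mulVec, smul_mulVec, smul_mulVec, pencilB_sub_pencilA]
  funext i
  simp only [Pi.add_apply, Pi.smul_apply, smul_eq_mul, mulVec_diagonal]
  split_ifs with hi
  · rw [pencilA_mulVec_apply_of_eq_zero a _ hi, hi, Nat.sub_zero]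
    have hsum : ∑ j : Fin n, a (n - 1 - j) * (bern n (n - 1 - j) z / (1 - z)) =
        (∑ k ∈ range n, a k * bern n k z) / (1 - z) := by
      simp only [← mul_div_assoc, ← Finset.sum_div,
        Fin.sum_univ_sub_one_sub n (fun k => a k * bern n k z)]
    obtain ⟨m, rfl⟩ : ∃ m, n = m + 1 := ⟨n - 1, by omega⟩
    have hlast := sub_mul_mul_bern (m + 1) m z
    push_cast at hlast
    rw [hsum, Finset.sum_range_succ _ (m + 1), Nat.add_sub_cancel]
    push_cast
    field_simp
    linear_combination a (m + 1) * hlast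
  · rw [pencilA_mulVec_apply_of_ne_zero a _ hi]
    have hk : n - 1 - (i - 1) = n - 1 - i + 1 := by omega
    have hcancel := sub_mul_mul_bern n (n - 1 - i) z
    rw [Nat.cast_sub (by omega), Nat.cast_sub (by omega)] at hcancel
    simp only [hk]
    have hni : (n : ℝ) - i ≠ 0 := sub_ne_zero.mpr (by exact_mod_cast i.isLt.ne')
    field_simp
    linear_combination hcancel

theorem jonsson_companion_pencil (n : ℕ) (hn : 1 ≤ n) (a : ℕ → ℝ) (z : ℝ) (hz : z ≠ 1) :
    (z • pencilB n a - pencilA n a).mulVec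
        (fun i : Fin n => bern n (n - 1 - (i : ℕ)) z / (1 - z)) =
      (fun i : Fin n =>
        if (i : ℕ) = 0 then ∑ k ∈ Finset.range (n + 1), a k * bern n k z else 0) ∧
    ((∑ k ∈ Finset.range (n + 1), a k * bern n k z) = 0 ↔
      (z • pencilB n a - pencilA n a).mulVec
          (fun i : Fin n => bern n (n - 1 - (i : ℕ)) z / (1 - z)) = 0) := by
  have hmulVec := pencil_mulVec_bern n a hz
  refine ⟨hmulVec, ?_⟩
  rw [hmulVec, funext_iff]
  exact ⟨fun h i => by simp [h], fun h => by simpa using h ⟨0, hn⟩⟩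
end

section
/- Let P(x) = ∑_{i=0}^n a_i B_i^n(x) and let (A_P, B_P) be the Jónsson companion pencil matrices. Then det(x·B_P − A_P) = P(x) as polynomials (up to the stated normalization). -/
/-!
The pencil `X • B_P - A_P` has a full first row `v` and, below it, only the subdiagonal `X - 1`
and the diagonal `(k + 1) X / (n - k)`. Expanding along the first column gives
`det = ∑ⱼ vⱼ (1 - X)ʲ ∏_{j < k < n} (k + 1) X / (n - k)`, and the product telescopes to
`choose n (j + 1) Xⁿ⁻¹⁻ʲ`. So the `j`-th term is `a_{n-1-j} B^n_{n-1-j}`, and the correction `a_n / n`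
in the corner of `B_P` contributes the missing `a_n B^n_n`.
-/

open Polynomial

open Finset

namespace Matrix

variable {R : Type*} [CommRing R]

/-- `c i` and `d i` are the subdiagonal and diagonal entries of row `i`; `c 0` and `d 0` are
never used. -/
def firstRowBidiagonal (v c d : ℕ → R) (n : ℕ) : Matrix (Fin n) (Fin n) R :=
  of fun i j =>
    if (i : ℕ) = 0 then v j
    else if (i : ℕ) = j + 1 then c i
    else if (i : ℕ) = j then d i else 0

variable (v c d : ℕ → R)

theorem det_firstRowBidiagonal_submatrix_succ_succ (n : ℕ) :
    ((firstRowBidiagonal v c d (n + 1)).submatrix Fin.succ Fin.succ).det =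
      ∏ k ∈ Ico 1 (n + 1), d k := by
  rw [det_of_isLowerTriangular _ ?_, prod_Ico_eq_prod_range, Nat.add_sub_cancel,
    ← Fin.prod_univ_eq_prod_range]
  · refine prod_congr rfl fun i _ => ?_
    simp [firstRowBidiagonal, add_comm]
  · intro i j hij
    have hlt : (i : ℕ) < j := hij
    simp [firstRowBidiagonal, hlt.ne, show (i : ℕ) ≠ j + 1 by omega]

theorem firstRowBidiagonal_submatrix_succAbove_one (n : ℕ) :
    (firstRowBidiagonal v c d (n + 2)).submatrix (Fin.succAbove 1) Fin.succ =
      firstRowBidiagonal (v ∘ Nat.succ) (c ∘ Nat.succ) (d ∘ Nat.succ) (n + 1) := by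
  ext i j
  rcases Fin.eq_zero_or_eq_succ i with rfl | ⟨i, rfl⟩
  · simp [firstRowBidiagonal]
  · have hrow : (1 : Fin (n + 2)).succAbove i.succ = i.succ.succ :=
      Fin.succAbove_of_le_castSucc _ _ (by simp [Fin.le_iff_val_le_val])
    simp only [submatrix_apply, firstRowBidiagonal, of_apply, hrow, Fin.val_succ, Function.comp]
    split_ifs <;> first | rfl | omega

theorem det_firstRowBidiagonal_succ_succ (n : ℕ) :
    (firstRowBidiagonal v c d (n + 2)).det =
      v 0 * ∏ k ∈ Ico 1 (n + 2), d k -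
        c 1 * (firstRowBidiagonal (v ∘ Nat.succ) (c ∘ Nat.succ) (d ∘ Nat.succ) (n + 1)).det := by
  rw [det_succ_column_zero, Fin.sum_univ_succ, Fin.sum_univ_succ, Fin.succAbove_zero,
    det_firstRowBidiagonal_submatrix_succ_succ, Fin.succ_zero_eq_one,
    firstRowBidiagonal_submatrix_succAbove_one]
  simp [firstRowBidiagonal, sub_eq_add_neg]

theorem det_firstRowBidiagonal (n : ℕ) :
    (firstRowBidiagonal v c d (n + 1)).det =
      ∑ j ∈ range (n + 1), v j * (∏ k ∈ Ico 1 (j + 1), -c k) * ∏ k ∈ Ico (j + 1) (n + 1), d k := by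
  induction n generalizing v c d with
  | zero => simp [firstRowBidiagonal]
  | succ n ih =>
    rw [det_firstRowBidiagonal_succ_succ, ih, sum_range_succ' _ (n + 1), mul_sum, sub_eq_add_neg,
      ← sum_neg_distrib, add_comm]
    congr 1
    · refine sum_congr rfl fun j _ => ?_
      rw [prod_eq_prod_Ico_succ_bot (by omega : 1 < j + 1 + 1), ← prod_Ico_add' (fun k => -c k),
        ← prod_Ico_add' d]
      simp only [Function.comp, Nat.succ_eq_add_one]
      ring
    · simp

end Matrix

theorem prod_Ico_succ_div_sub_eq_choose {K : Type*} [Field K] [CharZero K] {n j : ℕ}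
    (hj : j ≤ n) : ∏ k ∈ Ico j n, ((k : K) + 1) / (n - k) = n.choose j := by
  induction hj using Nat.decreasingInduction with
  | self => simp
  | of_succ j hjn ih =>
    rw [prod_eq_prod_Ico_succ_bot hjn, ih]
    have hsub : (n : K) - j ≠ 0 := sub_ne_zero.2 (by exact_mod_cast hjn.ne')
    have hchoose := congrArg (Nat.cast : ℕ → K) (Nat.choose_succ_right_eq n j)
    push_cast [Nat.cast_sub hjn.le] at hchoose
    field_simp
    linear_combination hchoose

open Matrix

section Pencil

variable (n : ℕ) (a : ℕ → ℝ)

noncomputable def pencilFirstRow (j : ℕ) : ℝ[X] :=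
  C (a (n - 1 - j)) * (1 - X) + if j = 0 then C (a n / n) * X else 0

theorem pencil_eq_firstRowBidiagonal :
    (X : ℝ[X]) • (pencilB n a).map C - (pencilA n a).map C =
      firstRowBidiagonal (pencilFirstRow n a) (fun _ => X - 1)
        (fun k : ℕ => C (((k : ℝ) + 1) / (n - k)) * X) n := by
  refine Matrix.ext fun i j => ?_
  simp only [Matrix.sub_apply, Matrix.smul_apply, map_apply, pencilA, pencilB, firstRowBidiagonal,
    pencilFirstRow, of_apply, smul_eq_mul]
  split_ifs <;> first | omega | (simp_all <;> ring)

theorem prod_Ico_C_mul_X_eq_choose {j : ℕ} (hj : j < n) :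
    ∏ k ∈ Ico (j + 1) n, C (((k : ℝ) + 1) / (n - k)) * X =
      C (n.choose (j + 1) : ℝ) * X ^ (n - 1 - j) := by
  rw [prod_mul_distrib, prod_const, ← map_prod, prod_Ico_succ_div_sub_eq_choose hj,
    Nat.card_Ico, Nat.sub_sub, add_comm 1]

theorem pencilFirstRow_mul_eq_bernstein {m j : ℕ} (hj : j ≤ m) :
    pencilFirstRow (m + 1) a j * (1 - X) ^ j * (C ((m + 1).choose (j + 1) : ℝ) * X ^ (m - j)) =
      C (a (m - j)) * bernsteinPolynomial ℝ (m + 1) (m - j) +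
        if j = 0 then C (a (m + 1)) * bernsteinPolynomial ℝ (m + 1) (m + 1) else 0 := by
  have hchoose : (m + 1).choose (m - j) = (m + 1).choose (j + 1) := by
    rw [Nat.choose_symm_of_eq_add]; omega
  have hexp : m + 1 - (m - j) = j + 1 := by omega
  simp only [pencilFirstRow, bernsteinPolynomial, Nat.add_sub_cancel, hchoose, hexp,
    Nat.choose_self, Nat.sub_self, ← C_eq_natCast]
  split_ifs with hj0
  · subst hj0
    have hlead : C (a (m + 1) / (m + 1 : ℕ)) * C ((m + 1 : ℕ) : ℝ) = C (a (m + 1)) := by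
      rw [← map_mul, div_mul_cancel₀ _ (by positivity)]
    simp only [Nat.choose_one_right, Nat.sub_zero, zero_add, Nat.cast_one, map_one]
    linear_combination X ^ (m + 1) * hlead
  · ring

end Pencil

theorem jonsson_pencil_det (n : ℕ) (hn : 1 ≤ n) (a : ℕ → ℝ) :
    ((X : ℝ[X]) • (pencilB n a).map C - (pencilA n a).map C).det =
      ∑ i ∈ Finset.range (n + 1),
        C (a i) * ((n.choose i : ℝ[X]) * X ^ i * (1 - X) ^ (n - i)) := by
  obtain ⟨m, rfl⟩ : ∃ m, n = m + 1 := ⟨n - 1, by omega⟩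
  have hterm : ∀ j ∈ range (m + 1), pencilFirstRow (m + 1) a j * (∏ k ∈ Ico 1 (j + 1), -(X - 1)) *
      ∏ k ∈ Ico (j + 1) (m + 1), C (((k : ℝ) + 1) / ((m + 1 : ℕ) - k)) * X =
      C (a (m - j)) * bernsteinPolynomial ℝ (m + 1) (m - j) +
        if j = 0 then C (a (m + 1)) * bernsteinPolynomial ℝ (m + 1) (m + 1) else 0 := by
    intro j hj
    rw [prod_Ico_C_mul_X_eq_choose _ (by simpa using hj), prod_const, Nat.card_Ico, neg_sub,
      Nat.add_sub_cancel, Nat.add_sub_cancel, pencilFirstRow_mul_eq_bernstein _ (by simpa using hj)]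
  rw [pencil_eq_firstRowBidiagonal, det_firstRowBidiagonal, sum_congr rfl hterm, sum_add_distrib,
    sum_ite_eq', if_pos (by simp), sum_range_succ _ (m + 1)]
  exact congrArg (· + _) (sum_range_reflect (fun i => C (a i) * bernsteinPolynomial ℝ (m + 1) i) _)
end
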